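/- Let g ∈ ℂ^N have nonzero entries, M = [diag(Re g) diag(Im g)], and M† = Mᵀ(M Mᵀ)^{-1}. Viewing the map ℝ^{2N} → ℂ^N given by [a; b] ↦ a + i·b, the composition [I iI] M† equals diag(conj(g))^{-1}, i.e., ([I iI] M† d)_r = d_r / conj(g_r) for all d ∈ ℝ^N. -/

import Mathlib

/-! Since `M Mᵀ = diag (|g_r|²)`, the vector `Mᵀ (M Mᵀ)⁻¹ d` has entries `Re g_r · d_r / |g_r|²` and
`Im g_r · d_r / |g_r|²`; recombined they give `g_r d_r / |g_r|² = d_r / conj g_r`. -/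

open Matrix ComplexConjugate

namespace Matrix

variable {n R K : Type*} [Fintype n] [DecidableEq n]

theorem inv_diagonal_of_ne_zero [Field K] {v : n → K} (hv : ∀ i, v i ≠ 0) :
    (diagonal v)⁻¹ = diagonal fun i => (v i)⁻¹ :=
  inv_eq_left_inv <| by
    rw [diagonal_mul_diagonal, ← diagonal_one]
    exact congrArg diagonal (funext fun i => inv_mul_cancel₀ (hv i))

theorem fromCols_diagonal_mul_transpose [CommSemiring R] (a b : n → R) :
    fromCols (diagonal a) (diagonal b) * (fromCols (diagonal a) (diagonal b))ᵀ =
      diagonal fun i => a i * a i + b i * b i := by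
  rw [transpose_fromCols, diagonal_transpose, diagonal_transpose, fromCols_mul_fromRows,
    diagonal_mul_diagonal, diagonal_mul_diagonal, diagonal_add]

theorem transpose_mul_inv_mulVec_fromCols_diagonal [Field K] (a b d : n → K)
    (hab : ∀ i, a i * a i + b i * b i ≠ 0) :
    let M := fromCols (diagonal a) (diagonal b)
    (Mᵀ * (M * Mᵀ)⁻¹) *ᵥ d =
      Sum.elim (fun i => a i * d i / (a i * a i + b i * b i))
        (fun i => b i * d i / (a i * a i + b i * b i)) := by
  intro M
  rw [fromCols_diagonal_mul_transpose, inv_diagonal_of_ne_zero hab, transpose_fromCols,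
    diagonal_transpose, diagonal_transpose, fromRows_mul, diagonal_mul_diagonal,
    diagonal_mul_diagonal, fromRows_mulVec]
  ext (i | i) <;> simp only [Sum.elim_inl, Sum.elim_inr, mulVec_diagonal] <;> ring

end Matrix

theorem Complex.ofReal_div_conj (t : ℝ) (g : ℂ) :
    t / conj g = ((g.re * t / (g.re * g.re + g.im * g.im) : ℝ) : ℂ) +
      I * ((g.im * t / (g.re * g.re + g.im * g.im) : ℝ) : ℂ) := by
  rw [← normSq_apply, div_eq_mul_inv (t : ℂ), inv_def, conj_conj, normSq_conj]
  push_cast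
  linear_combination -(t : ℂ) * (normSq g : ℂ)⁻¹ * re_add_im g

theorem complexified_pseudoinverse (N : ℕ) (g : Fin N → ℂ) (hg : ∀ r, g r ≠ 0)
    (d : Fin N → ℝ) :
    let M : Matrix (Fin N) (Fin N ⊕ Fin N) ℝ :=
      Matrix.fromCols (Matrix.diagonal fun r => (g r).re)
        (Matrix.diagonal fun r => (g r).im)
    let x : Fin N ⊕ Fin N → ℝ := (M.transpose * (M * M.transpose)⁻¹).mulVec d
    ∀ r, (x (Sum.inl r) : ℂ) + Complex.I * (x (Sum.inr r) : ℂ) =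
      (d r : ℂ) / (starRingEnd ℂ) (g r) := by
  intro M x r
  have hx : x = _ := transpose_mul_inv_mulVec_fromCols_diagonal _ _ d fun r =>
    Complex.normSq_apply (g r) ▸ (Complex.normSq_pos.mpr (hg r)).ne'
  rw [hx, Sum.elim_inl, Sum.elim_inr]
  exact (Complex.ofReal_div_conj (d r) (g r)).symm
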